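/- Let G be a connected biconvex bipartite graph. Then γ(G) ≤ 2 ρ(G). -/

import Mathlib

open SimpleGraph Finset

/-- `X` is a dominating set of `G`: every vertex is in `X` or adjacent to a vertex of `X`. -/
def IsDominatingSet {V : Type*} (G : SimpleGraph V) (X : Finset V) : Prop :=
  ∀ v : V, v ∈ X ∨ ∃ u ∈ X, G.Adj u v

/-- The domination number of `G`. -/
noncomputable def domNum {V : Type*} (G : SimpleGraph V) : ℕ :=
  sInf {n : ℕ | ∃ X : Finset V, IsDominatingSet G X ∧ X.card = n}

/-- `Y` is a packing of `G`: closed neighborhoods of distinct vertices of `Y` are disjoint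
(equivalently, distinct vertices of `Y` are at distance at least 3). -/
def IsPackingSet {V : Type*} (G : SimpleGraph V) (Y : Finset V) : Prop :=
  ∀ u ∈ Y, ∀ v ∈ Y, u ≠ v →
    Disjoint (insert u (G.neighborSet u)) (insert v (G.neighborSet v))

/-- The packing number of `G`. -/
noncomputable def packNum {V : Type*} (G : SimpleGraph V) : ℕ :=
  sSup {n : ℕ | ∃ Y : Finset V, IsPackingSet G Y ∧ Y.card = n}

/-- `(X, Y)` is a bipartition of `G`. -/
def IsBipartitionWith {V : Type*} (G : SimpleGraph V) (X Y : Finset V) : Prop :=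
  Disjoint X Y ∧ (∀ v : V, v ∈ X ∨ v ∈ Y) ∧
    ∀ ⦃u v : V⦄, G.Adj u v → (u ∈ X ∧ v ∈ Y) ∨ (u ∈ Y ∧ v ∈ X)

/-- `G` is biconvex with parts `X`, `Y`: both parts admit orderings in which every
neighborhood of a vertex of the other part is an interval of consecutive vertices. -/
def IsBiconvexWith {V : Type*} (G : SimpleGraph V) (X Y : Finset V) : Prop :=
  IsBipartitionWith G X Y ∧
    (∃ f : V → ℕ, Set.InjOn f X ∧
      ∀ y ∈ Y, ∀ a ∈ X, ∀ b ∈ X, ∀ c ∈ X,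
        f a ≤ f b → f b ≤ f c → G.Adj y a → G.Adj y c → G.Adj y b) ∧
    (∃ g : V → ℕ, Set.InjOn g Y ∧
      ∀ x ∈ X, ∀ a ∈ Y, ∀ b ∈ Y, ∀ c ∈ Y,
        g a ≤ g b → g b ≤ g c → G.Adj x a → G.Adj x c → G.Adj x b)

/-! Greedy sweep along the ordering of one side. Choose `x ∈ X` whose neighborhood, an interval
of `Y`, has the leftmost right endpoint `y`. Every vertex of `X` sharing a neighbor with `x` has
an interval ending at or after `y`, hence containing `y`; so `y` dominates those vertices, and `x`
shares no neighbor with the others. Recursing on the undominated vertices (an isolated vertex is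
its own dominator) yields `k` vertices dominating `X` and a packing of `k` vertices of `X`. The
same on `Y`, and the union of the two dominating sets, give `γ ≤ 2ρ`. -/

namespace SimpleGraph

variable {V : Type*} (G : SimpleGraph V)

def closedNbhd (v : V) : Set V := insert v (G.neighborSet v)

variable {G}

theorem mem_closedNbhd {u v : V} : v ∈ G.closedNbhd u ↔ v = u ∨ G.Adj u v := Iff.rfl

theorem self_mem_closedNbhd (v : V) : v ∈ G.closedNbhd v := Set.mem_insert v _

theorem disjoint_closedNbhd_iff {u v : V} :
    Disjoint (G.closedNbhd u) (G.closedNbhd v) ↔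
      u ≠ v ∧ ¬G.Adj u v ∧ Disjoint (G.neighborSet u) (G.neighborSet v) := by
  simp only [closedNbhd, Set.disjoint_insert_left, Set.disjoint_insert_right, Set.mem_insert_iff,
    mem_neighborSet, not_or, G.adj_comm v u]
  tauto

end SimpleGraph

section

variable {V : Type*} {G : SimpleGraph V} {X Y : Finset V}

theorem isPackingSet_iff_pairwiseDisjoint {P : Finset V} :
    IsPackingSet G P ↔ (P : Set V).PairwiseDisjoint G.closedNbhd :=
  Iff.rfl

theorem isDominatingSet_iff_forall_mem_closedNbhd {D : Finset V} :
    IsDominatingSet G D ↔ ∀ v, ∃ u ∈ D, v ∈ G.closedNbhd u := by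
  refine forall_congr' fun v => ⟨?_, ?_⟩
  · rintro (hv | ⟨u, hu, huv⟩)
    exacts [⟨v, hv, .inl rfl⟩, ⟨u, hu, .inr huv⟩]
  · rintro ⟨u, hu, rfl | huv⟩
    exacts [.inl hu, .inr ⟨u, hu, huv⟩]

theorem domNum_le_card {D : Finset V} (hD : IsDominatingSet G D) : domNum G ≤ D.card :=
  Nat.sInf_le ⟨D, hD, rfl⟩

theorem card_le_packNum [Fintype V] {P : Finset V} (hP : IsPackingSet G P) : P.card ≤ packNum G :=
  le_csSup ⟨Fintype.card V, by rintro _ ⟨Q, -, rfl⟩; exact card_le_univ Q⟩ ⟨P, hP, rfl⟩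

theorem IsBipartitionWith.symm (h : IsBipartitionWith G X Y) : IsBipartitionWith G Y X :=
  ⟨h.1.symm, fun v => (h.2.1 v).symm, fun _ _ huv => (h.2.2 huv).symm⟩

theorem IsBipartitionWith.isIndepSet_left (h : IsBipartitionWith G X Y) :
    G.IsIndepSet (X : Set V) := by
  intro u hu v hv _ huv
  rcases h.2.2 huv with ⟨-, hvY⟩ | ⟨huY, -⟩
  · exact disjoint_left.1 h.1 hv hvY
  · exact disjoint_left.1 h.1 hu huY

theorem IsBipartitionWith.neighborSet_subset_right (h : IsBipartitionWith G X Y) {x : V}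
    (hx : x ∈ X) : G.neighborSet x ⊆ Y := by
  intro y hxy
  rcases h.2.2 hxy with ⟨-, hyY⟩ | ⟨hxY, -⟩
  · exact hyY
  · exact absurd hxY (disjoint_left.1 h.1 hx)

theorem exists_dominating_card_le_packing (F : Finset V)
    (step : ∀ F' ⊆ F, F'.Nonempty → ∃ x ∈ F', ∃ y, x ∈ G.closedNbhd y ∧
      ∀ x' ∈ F', x' ∉ G.closedNbhd y → Disjoint (G.closedNbhd x) (G.closedNbhd x')) :
    ∃ H P : Finset V, (∀ v ∈ F, ∃ u ∈ H, v ∈ G.closedNbhd u) ∧ P ⊆ F ∧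
      IsPackingSet G P ∧ H.card ≤ P.card := by
  classical
  induction F using Finset.strongInduction with
  | H F ih =>
  rcases F.eq_empty_or_nonempty with rfl | hF
  · exact ⟨∅, ∅, by simp, subset_rfl, by simp [IsPackingSet], le_rfl⟩
  obtain ⟨x, hxF, y, hxy, hdisj⟩ := step F subset_rfl hF
  set F' := F.filter (· ∉ G.closedNbhd y)
  have hF'F : F' ⊆ F := filter_subset _ _
  have hxF' : x ∉ F' := fun h => (mem_filter.1 h).2 hxy
  obtain ⟨H, P, hdom, hPF', hP, hcard⟩ :=
    ih F' (filter_ssubset.2 ⟨x, hxF, not_not.2 hxy⟩) fun F'' h => step F'' (h.trans hF'F)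
  refine ⟨insert y H, insert x P, ?_, insert_subset hxF (hPF'.trans hF'F), ?_, ?_⟩
  · intro v hv
    by_cases hvy : v ∈ G.closedNbhd y
    · exact ⟨y, mem_insert_self _ _, hvy⟩
    · obtain ⟨u, hu, hvu⟩ := hdom v (mem_filter.2 ⟨hv, hvy⟩)
      exact ⟨u, mem_insert_of_mem hu, hvu⟩
  · rw [isPackingSet_iff_pairwiseDisjoint, coe_insert]
    exact (isPackingSet_iff_pairwiseDisjoint.1 hP).insert fun x' hx' _ =>
      hdisj x' (hF'F (hPF' hx')) (mem_filter.1 (hPF' hx')).2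
  · calc (insert y H).card ≤ H.card + 1 := card_insert_le _ _
      _ ≤ P.card + 1 := by omega
      _ = (insert x P).card := (card_insert_of_notMem fun h => hxF' (hPF' h)).symm

theorem exists_greedy_step_of_convex [Fintype V] [DecidableRel G.Adj] {S : Set V} {g : V → ℕ}
    {F : Finset V} (hF : F.Nonempty) (hind : G.IsIndepSet (F : Set V))
    (hS : ∀ x ∈ F, G.neighborSet x ⊆ S)
    (hconv : ∀ x ∈ F, ∀ a ∈ S, ∀ b ∈ S, ∀ c ∈ S,
      g a ≤ g b → g b ≤ g c → G.Adj x a → G.Adj x c → G.Adj x b) :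
    ∃ x ∈ F, ∃ y, x ∈ G.closedNbhd y ∧
      ∀ x' ∈ F, x' ∉ G.closedNbhd y → Disjoint (G.closedNbhd x) (G.closedNbhd x') := by
  by_cases hiso : ∃ x ∈ F, ∀ y, ¬G.Adj x y
  · obtain ⟨x, hxF, hx⟩ := hiso
    refine ⟨x, hxF, x, self_mem_closedNbhd x, fun x' _ hx' => ?_⟩
    rw [mem_closedNbhd, not_or] at hx'
    refine disjoint_closedNbhd_iff.2 ⟨Ne.symm hx'.1, hx'.2, ?_⟩
    simp [Set.disjoint_left, hx]
  push Not at hiso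
  -- `y` is the leftmost right endpoint of a neighborhood; by convexity every neighborhood
  -- meeting that of `x` reaches `y`.
  obtain ⟨x, hxF, hxmin⟩ :=
    exists_min_image F (fun x => (G.neighborFinset x).sup g) hF
  obtain ⟨y, hy, hgy⟩ := exists_mem_eq_sup (G.neighborFinset x)
    (let ⟨y, hxy⟩ := hiso x hxF; ⟨y, (G.mem_neighborFinset x y).2 hxy⟩) g
  rw [mem_neighborFinset] at hy
  refine ⟨x, hxF, y, .inr hy.symm, fun x' hx'F hx' => ?_⟩
  rw [mem_closedNbhd, not_or] at hx'
  have hne : x ≠ x' := by rintro rfl; exact hx'.2 hy.symm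
  refine disjoint_closedNbhd_iff.2 ⟨hne, hind hxF hx'F hne, Set.disjoint_left.2 ?_⟩
  intro z hxz hx'z
  rw [mem_neighborSet] at hxz hx'z
  obtain ⟨w, hw, hgw⟩ := exists_mem_eq_sup (G.neighborFinset x')
    ⟨z, (G.mem_neighborFinset x' z).2 hx'z⟩ g
  rw [mem_neighborFinset] at hw
  have hzy : g z ≤ g y := hgy ▸ le_sup ((G.mem_neighborFinset x z).2 hxz)
  have hyw : g y ≤ g w := hgy ▸ hgw ▸ hxmin x' hx'F
  exact hx'.2 (hconv x' hx'F z (hS x' hx'F hx'z) y (hS x hxF hy) w (hS x' hx'F hw)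
    hzy hyw hx'z hw).symm

theorem exists_dominating_card_le_packing_of_convex [Fintype V] {S : Set V} {g : V → ℕ}
    {F : Finset V} (hind : G.IsIndepSet (F : Set V)) (hS : ∀ x ∈ F, G.neighborSet x ⊆ S)
    (hconv : ∀ x ∈ F, ∀ a ∈ S, ∀ b ∈ S, ∀ c ∈ S,
      g a ≤ g b → g b ≤ g c → G.Adj x a → G.Adj x c → G.Adj x b) :
    ∃ H P : Finset V, (∀ v ∈ F, ∃ u ∈ H, v ∈ G.closedNbhd u) ∧ P ⊆ F ∧
      IsPackingSet G P ∧ H.card ≤ P.card := by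
  classical
  exact exists_dominating_card_le_packing F fun F' hF' hne =>
    exists_greedy_step_of_convex hne (hind.mono hF') (fun x hx => hS x (hF' hx))
      fun x hx => hconv x (hF' hx)

end

theorem biconvex_domination_le_two_packing_general {V : Type*} [Fintype V]
    (G : SimpleGraph V) (X Y : Finset V)
    (hbc : IsBiconvexWith G X Y) :
    domNum G ≤ 2 * packNum G := by
  classical
  obtain ⟨hbip, ⟨f, -, hf⟩, ⟨g, -, hg⟩⟩ := hbc
  obtain ⟨HY, PX, hHY, -, hPX, hcardX⟩ := exists_dominating_card_le_packing_of_convex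
    hbip.isIndepSet_left (fun _ => hbip.neighborSet_subset_right) hg
  obtain ⟨HX, PY, hHX, -, hPY, hcardY⟩ := exists_dominating_card_le_packing_of_convex
    hbip.symm.isIndepSet_left (fun _ => hbip.symm.neighborSet_subset_right) hf
  have hdom : IsDominatingSet G (HY ∪ HX) :=
    isDominatingSet_iff_forall_mem_closedNbhd.2 fun v => (hbip.2.1 v).elim
        (fun hv => let ⟨u, hu, hvu⟩ := hHY v hv; ⟨u, mem_union_left _ hu, hvu⟩)
        (fun hv => let ⟨u, hu, hvu⟩ := hHX v hv; ⟨u, mem_union_right _ hu, hvu⟩)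
  calc domNum G ≤ (HY ∪ HX).card := domNum_le_card hdom
    _ ≤ HY.card + HX.card := card_union_le _ _
    _ ≤ PX.card + PY.card := add_le_add hcardX hcardY
    _ ≤ 2 * packNum G := by linarith [card_le_packNum hPX, card_le_packNum hPY]

theorem biconvex_domination_le_two_packing {V : Type*} [Fintype V] [DecidableEq V]
    (G : SimpleGraph V) (hconn : G.Connected) (X Y : Finset V)
    (hbc : IsBiconvexWith G X Y) :
    domNum G ≤ 2 * packNum G :=
  biconvex_domination_le_two_packing_general G X Y hbc
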